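/- arXiv:1204.1565 — 9 statements merged into one kernel-verified Lean document; each statement's English description precedes it below -/
import Mathlib

section
/- Let p > 2 be prime and r ≥ 2 an integer, with t = v_p(r-1) the p-adic valuation of r-1. Then for every integer n ≥ 2, one has v_p(C(r,n)) + n ≥ t + 2, where C(r,n) is the binomial coefficient. -/
/-! Multiplying `C(r, n)` by `n (n - 1)` gives `r (r - 1) C(r - 2, n - 2)`, so
`t = v_p(r - 1) ≤ v_p(C(r, n)) + v_p(n (n - 1))`. Only one of the coprime numbers `n`, `n - 1`
is divisible by `p`, and for `p ≥ 3` every `m > 0` satisfies `3 ^ v_p(m) ≤ m`, hence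
`2 v_p(m) < m`; this bounds `v_p(n (n - 1))` by `n - 2`. -/

theorem Nat.choose_mul_mul_sub_one {n k : ℕ} (hk : 2 ≤ k) :
    n.choose k * (k * (k - 1)) = n * (n - 1) * (n - 2).choose (k - 2) := by
  obtain ⟨j, rfl⟩ : ∃ j, k = j + 2 := ⟨k - 2, by omega⟩
  match n with
  | 0 | 1 => simp [Nat.choose_eq_zero_of_lt]
  | m + 2 =>
    have h₁ := Nat.add_one_mul_choose_eq (m + 1) (j + 1)
    have h₂ := Nat.add_one_mul_choose_eq m j
    simp only [Nat.add_sub_cancel]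
    calc (m + 2).choose (j + 2) * ((j + 2) * (j + 1))
        = (m + 2) * ((m + 1).choose (j + 1) * (j + 1)) := by rw [← mul_assoc, ← h₁]; ring
      _ = (m + 2) * (m + 1) * m.choose j := by rw [← h₂]; ring

theorem two_mul_padicValNat_lt {p m : ℕ} [Fact p.Prime] (hp : 2 < p) (hm : m ≠ 0) :
    2 * padicValNat p m < m :=
  calc 2 * padicValNat p m < 1 + padicValNat p m * 2 := by omega
    _ ≤ (1 + 2) ^ padicValNat p m := one_add_le_pow_of_two_add_nonneg (by norm_num) _
    _ ≤ p ^ padicValNat p m := Nat.pow_le_pow_left hp _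
    _ ≤ m := Nat.le_of_dvd (Nat.pos_of_ne_zero hm) pow_padicValNat_dvd

theorem padicValNat_eq_zero_or_padicValNat_sub_one_eq_zero {p n : ℕ} [Fact p.Prime]
    (hn : n ≠ 0) : padicValNat p n = 0 ∨ padicValNat p (n - 1) = 0 := by
  by_contra! h
  have hcop : Nat.Coprime n (n - 1) :=
    (Nat.coprime_self_sub_right (by omega)).mpr n.coprime_one_right
  exact (Fact.out : p.Prime).one_lt.ne'
    (Nat.eq_one_of_dvd_coprimes hcop (dvd_of_one_le_padicValNat (by omega))
      (dvd_of_one_le_padicValNat (by omega)))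

theorem padicValNat_mul_sub_one_le {p n : ℕ} [Fact p.Prime] (hp : 2 < p) (hn : 2 ≤ n) :
    padicValNat p (n * (n - 1)) ≤ n - 2 := by
  rw [padicValNat.mul (by omega) (by omega)]
  have h₁ := two_mul_padicValNat_lt hp (m := n) (by omega)
  have h₂ := two_mul_padicValNat_lt hp (m := n - 1) (by omega)
  rcases padicValNat_eq_zero_or_padicValNat_sub_one_eq_zero (p := p) (n := n) (by omega) with h | h
    <;> omega

theorem stmt_0_general (p : ℕ) (hp : p.Prime) (hp2 : 2 < p) (r : ℕ)
    (t : ℕ) (ht : t = padicValNat p (r - 1)) :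
    ∀ n : ℕ, 2 ≤ n → emultiplicity p (r.choose n) + n ≥ (t : ℕ∞) + 2 := by
  have : Fact p.Prime := ⟨hp⟩
  subst ht
  intro n hn
  have hdvd : r - 1 ∣ r.choose n * (n * (n - 1)) := by
    rw [Nat.choose_mul_mul_sub_one hn]
    exact (Dvd.intro_left r rfl).mul_right _
  have hval : (padicValNat p (r - 1) : ℕ∞) ≤
      emultiplicity p (r.choose n) + padicValNat p (n * (n - 1)) := by
    rw [padicValNat_eq_emultiplicity (mul_ne_zero (by omega) (by omega)), ← hp.emultiplicity_mul]
    exact le_emultiplicity_of_pow_dvd (pow_padicValNat_dvd.trans hdvd)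
  have hv := padicValNat_mul_sub_one_le hp2 hn
  generalize emultiplicity p (r.choose n) = e at hval ⊢
  induction e using ENat.recTopCoe with
  | top => simp
  | coe e => norm_cast at hval ⊢; omega

/-- Lemma 2.1(1): for p > 2 prime, r ≥ 2, t = v_p(r-1), and n ≥ 2,
    v_p(C(r,n)) + n ≥ t + 2 (valuations taken in ℕ∞ so that v_p(0) = ⊤). -/
theorem stmt_0 (p : ℕ) (hp : p.Prime) (hp2 : 2 < p) (r : ℕ) (hr : 2 ≤ r)
    (t : ℕ) (ht : t = padicValNat p (r - 1)) :
    ∀ n : ℕ, 2 ≤ n → emultiplicity p (r.choose n) + n ≥ (t : ℕ∞) + 2 :=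
  stmt_0_general p hp hp2 r t ht
end

section
/- Let p > 2 be prime and r ≥ 2 an integer, with t = v_p(r-1). Then for every integer n ≥ 1, one has v_p(C(r-1,n)) + n ≥ t + 1. -/
/-!
Absorption: `m * C(m-1, n-1) = n * C(m, n)`, so `m ∣ n * C(m, n)` and
`v_p(m) ≤ v_p(C(m, n)) + v_p(n)`; and `v_p(n) ≤ n - 1` because `p ^ v_p(n) ≤ n`.
-/

theorem Nat.dvd_choose_mul (m n : ℕ) : m ∣ m.choose n * n := by
  rcases n with _ | k
  · simp
  rcases m with _ | a
  · simp
  exact ⟨a.choose k, (add_one_mul_choose_eq a k).symm⟩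

theorem Nat.emultiplicity_le_emultiplicity_choose_add {p : ℕ} (hp : p.Prime) (m n : ℕ) :
    emultiplicity p m ≤ emultiplicity p (m.choose n) + emultiplicity p n := by
  rw [← hp.emultiplicity_mul]
  exact emultiplicity_le_emultiplicity_of_dvd_right (dvd_choose_mul m n)

theorem Nat.emultiplicity_add_one_le_self {p n : ℕ} (hp : p.Prime) (hn : n ≠ 0) :
    emultiplicity p n + 1 ≤ n := by
  have : Fact p.Prime := ⟨hp⟩
  rw [← padicValNat_eq_emultiplicity hn]
  exact_mod_cast padicValNat_lt_self hn

theorem Nat.padicValNat_le_emultiplicity {p : ℕ} (hp : p.Prime) (m : ℕ) :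
    (padicValNat p m : ℕ∞) ≤ emultiplicity p m := by
  have : Fact p.Prime := ⟨hp⟩
  rcases eq_or_ne m 0 with rfl | hm
  · simp
  · rw [padicValNat_eq_emultiplicity hm]

theorem stmt_1_general (p : ℕ) (hp : p.Prime) (r : ℕ)
    (t : ℕ) (ht : t = padicValNat p (r - 1)) :
    ∀ n : ℕ, 1 ≤ n → emultiplicity p ((r - 1).choose n) + n ≥ (t : ℕ∞) + 1 := by
  intro n hn
  subst ht
  calc (padicValNat p (r - 1) : ℕ∞) + 1
      ≤ emultiplicity p ((r - 1).choose n) + emultiplicity p n + 1 := by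
        gcongr
        exact (Nat.padicValNat_le_emultiplicity hp _).trans
          (Nat.emultiplicity_le_emultiplicity_choose_add hp _ _)
    _ ≤ emultiplicity p ((r - 1).choose n) + n := by
        rw [add_assoc]
        gcongr
        exact Nat.emultiplicity_add_one_le_self hp (by omega)

/-- Lemma 2.1(2): for p > 2 prime, r ≥ 2, t = v_p(r-1), and n ≥ 1,
    v_p(C(r-1,n)) + n ≥ t + 1 (valuations in ℕ∞ so that v_p(0) = ⊤). -/
theorem stmt_1 (p : ℕ) (hp : p.Prime) (hp2 : 2 < p) (r : ℕ) (hr : 2 ≤ r)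
    (t : ℕ) (ht : t = padicValNat p (r - 1)) :
    ∀ n : ℕ, 1 ≤ n → emultiplicity p ((r - 1).choose n) + n ≥ (t : ℕ∞) + 1 :=
  stmt_1_general p hp r t ht
end

section
/- Let p > 2 be prime, r > 1 an integer with r ≡ 1 (mod p-1), and t = v_p(r-1). Then the sum over all μ ∈ F_p of (1 + [μ])^r, where [μ] is the Teichmüller lift of μ in Z_p, is congruent to r·p modulo p^{t+2}. -/
/-!
Write `r = (p - 1) m + 1`; as `p - 1` is prime to `p`, `p ^ t ∣ m`. If `u ∈ ℤ_p` is a unit then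
`u ^ (p - 1) = 1 + x` with `p ∣ x`, and for odd `p` the binomial theorem gives
`(1 + x) ^ m ≡ 1 + m x (mod p ^ (t + 2))`, i.e. `u ^ r ≡ u + m (u ^ p - u)`. This also holds for
`u = 0 = 1 + [-1]`, so it holds for every `u = 1 + [μ]`. The Teichmüller lift is multiplicative,
so by orthogonality of characters of `𝔽_p^×` the power sums `∑ [μ] ^ k` (`k ≥ 1`) vanish unless
`p - 1 ∣ k`. Hence `∑ (1 + [μ]) = p` and `∑ (1 + [μ]) ^ p = p + p (p - 1) = p ^ 2`, and the sum
of the approximations is `p + m (p ^ 2 - p) = r p`.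
-/

open Finset

section BinomialCongruences

variable {R : Type*} [CommRing R]

theorem sq_dvd_one_add_pow_sub (c : R) (s : ℕ) : c ^ 2 ∣ (1 + c) ^ s - (1 + s * c) := by
  induction s with
  | zero => simp
  | succ n ih =>
    have h : (1 + c) ^ (n + 1) - (1 + (n + 1 : ℕ) * c)
        = ((1 + c) ^ n - (1 + n * c)) * (1 + c) + n * c ^ 2 := by
      push_cast
      ring
    rw [h]
    exact dvd_add (ih.mul_right _) (dvd_mul_left _ _)

variable {p : ℕ}

theorem mul_sq_dvd_one_add_pow_prime_sub (hp : p.Prime) (hp2 : p ≠ 2) {a : R} (ha : (p : R) ∣ a) :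
    p * a ^ 2 ∣ (1 + a) ^ p - (1 + p * a) := by
  have hp3 : 3 ≤ p := by have := hp.two_le; omega
  have hexpand : (1 + a) ^ p - (1 + p * a) =
      ∑ k ∈ range (p - 1), a ^ (k + 2) * (p.choose (k + 2) : R) := by
    rw [add_comm, add_pow, show p + 1 = p - 1 + 1 + 1 by omega, sum_range_succ', sum_range_succ']
    simp only [one_pow, mul_one, zero_add, pow_one, Nat.choose_one_right, pow_zero, tsub_zero,
      Nat.choose_zero_right, Nat.cast_one]
    ring
  rw [hexpand]
  refine dvd_sum fun k hk => ?_
  rcases (show k + 2 < p ∨ k + 2 = p by have := mem_range.mp hk; omega) with hlt | rfl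
  · obtain ⟨c, hc⟩ := hp.dvd_choose_self (by omega) hlt
    exact Dvd.intro (a ^ k * c) (by rw [hc]; push_cast; ring)
  · rw [Nat.choose_self, Nat.cast_one, mul_one, pow_add]
    exact mul_dvd_mul (ha.pow (by omega)) dvd_rfl

theorem pow_dvd_one_add_pow_prime_pow_sub (hp : p.Prime) (hp2 : p ≠ 2) {x : R}
    (hx : (p : R) ∣ x) (t : ℕ) : (p : R) ^ (t + 2) ∣ (1 + x) ^ p ^ t - (1 + p ^ t * x) := by
  induction t with
  | zero => simp
  | succ t ih =>
    obtain ⟨x', rfl⟩ := hx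
    obtain ⟨y, hy⟩ := ih
    have hpow : (1 + p * x') ^ p ^ (t + 1) = (1 + p ^ (t + 1) * (x' + p * y)) ^ p := by
      rw [pow_succ, pow_mul]
      congr 1
      linear_combination hy
    set a : R := p ^ (t + 1) * (x' + p * y) with ha
    have hsplit : (1 + a) ^ p - (1 + p ^ (t + 1) * (p * x'))
        = ((1 + a) ^ p - (1 + p * a)) + p ^ (t + 3) * y := by
      rw [ha]
      ring
    rw [hpow, hsplit]
    refine dvd_add ((?_ : _ ∣ (p : R) * a ^ 2).trans (mul_sq_dvd_one_add_pow_prime_sub hp hp2 ?_))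
      (dvd_mul_right _ _)
    · exact Dvd.intro (p ^ t * (x' + p * y) ^ 2) (by rw [ha]; ring)
    · exact Dvd.intro (p ^ t * (x' + p * y)) (by rw [ha]; ring)

theorem pow_dvd_one_add_pow_sub (hp : p.Prime) (hp2 : p ≠ 2) {x : R} (hx : (p : R) ∣ x)
    {t n : ℕ} (hn : p ^ t ∣ n) : (p : R) ^ (t + 2) ∣ (1 + x) ^ n - (1 + n * x) := by
  obtain ⟨s, rfl⟩ := hn
  obtain ⟨x', rfl⟩ := hx
  obtain ⟨y, hy⟩ := pow_dvd_one_add_pow_prime_pow_sub hp hp2 (dvd_mul_right (p : R) x') t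
  have hpow : (1 + p * x') ^ (p ^ t * s) = (1 + p ^ (t + 1) * (x' + p * y)) ^ s := by
    rw [pow_mul]
    congr 1
    linear_combination hy
  set c : R := p ^ (t + 1) * (x' + p * y) with hc
  have hsplit : (1 + c) ^ s - (1 + (p ^ t * s : ℕ) * (p * x'))
      = ((1 + c) ^ s - (1 + s * c)) + p ^ (t + 2) * (s * y) := by
    rw [hc]
    push_cast
    ring
  rw [hpow, hsplit]
  refine dvd_add ((?_ : _ ∣ c ^ 2).trans (sq_dvd_one_add_pow_sub c s)) (dvd_mul_right _ _)
  exact Dvd.intro (p ^ t * (x' + p * y) ^ 2) (by rw [hc]; ring)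

theorem pow_dvd_pow_pred_mul_add_one_sub (hp : p.Prime) (hp2 : p ≠ 2) {u : R}
    (hu : (p : R) ∣ u ^ (p - 1) - 1) {t m : ℕ} (hm : p ^ t ∣ m) :
    (p : R) ^ (t + 2) ∣ u ^ ((p - 1) * m + 1) - (u + m * (u ^ p - u)) := by
  have hup : u ^ p = u ^ (p - 1) * u := by rw [← pow_succ, Nat.sub_add_cancel hp.one_le]
  have hfactor : u ^ ((p - 1) * m + 1) - (u + m * (u ^ p - u))
      = ((1 + (u ^ (p - 1) - 1)) ^ m - (1 + m * (u ^ (p - 1) - 1))) * u := by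
    rw [hup, pow_succ, pow_mul]
    ring
  rw [hfactor]
  exact (pow_dvd_one_add_pow_sub hp hp2 hu hm).mul_right u

end BinomialCongruences

namespace PadicInt

variable {p : ℕ} [Fact p.Prime]

theorem dvd_of_toZMod_eq_zero {x : ℤ_[p]} (hx : toZMod x = 0) : (p : ℤ_[p]) ∣ x := by
  rw [← Ideal.mem_span_singleton, ← maximalIdeal_eq_span_p, ← ker_toZMod]
  exact hx

theorem eq_of_pow_eq_self {a b : ℤ_[p]} (ha : a ^ p = a) (hb : b ^ p = b)
    (hab : toZMod a = toZMod b) : a = b := by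
  set Q := ∑ i ∈ range p, a ^ i * b ^ (p - 1 - i)
  have hQ : toZMod Q = 0 := by
    simp only [Q, map_sum, map_mul, map_pow, hab, geom_sum₂_self, ZMod.natCast_self, zero_mul]
  have hQ1 : Q - 1 ≠ 0 := fun h => by simp [sub_eq_zero.mp h] at hQ
  have hmul : (Q - 1) * (a - b) = 0 := by rw [sub_mul, geom_sum₂_mul, ha, hb, one_mul, sub_self]
  exact sub_eq_zero.mp ((mul_eq_zero.mp hmul).resolve_left hQ1)

section Teichmuller

variable {T : ZMod p → ℤ_[p]} (hT1 : ∀ μ, T μ ^ p = T μ) (hT2 : ∀ μ, toZMod (T μ) = μ)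
include hT1 hT2

theorem teichmuller_toZMod {a : ℤ_[p]} (ha : a ^ p = a) : T (toZMod a) = a :=
  eq_of_pow_eq_self (hT1 _) ha (hT2 _)

theorem teichmuller_zero : T 0 = 0 := by
  simpa using teichmuller_toZMod hT1 hT2 (zero_pow (Fact.out : p.Prime).ne_zero)

theorem teichmuller_one : T 1 = 1 := by
  simpa using teichmuller_toZMod hT1 hT2 (one_pow p)

theorem teichmuller_neg_one (hp2 : p ≠ 2) : T (-1) = -1 := by
  simpa using teichmuller_toZMod hT1 hT2 ((Fact.out : p.Prime).odd_of_ne_two hp2).neg_one_pow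

theorem teichmuller_mul (μ ν : ZMod p) : T (μ * ν) = T μ * T ν := by
  simpa [hT2] using teichmuller_toZMod hT1 hT2 (a := T μ * T ν) (by rw [mul_pow, hT1, hT1])

theorem teichmuller_pow (μ : ZMod p) (k : ℕ) : T (μ ^ k) = T μ ^ k := by
  simpa [hT2] using
    teichmuller_toZMod hT1 hT2 (a := T μ ^ k) (by rw [← pow_mul, mul_comm, pow_mul, hT1])

theorem sum_teichmuller_pow {k : ℕ} (hk : k ≠ 0) :
    ∑ μ : ZMod p, T μ ^ k = if p - 1 ∣ k then ((p - 1 : ℕ) : ℤ_[p]) else 0 := by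
  classical
  let χ : (ZMod p)ˣ →* ℤ_[p] :=
    { toFun u := T u ^ k
      map_one' := by simp [teichmuller_one hT1 hT2]
      map_mul' u v := by simp [teichmuller_mul hT1 hT2, mul_pow] }
  have hχ : χ = 1 ↔ p - 1 ∣ k := by
    have hunits := FiniteField.forall_pow_eq_one_iff (ZMod p) k
    rw [ZMod.card] at hunits
    rw [← hunits, DFunLike.ext_iff]
    refine forall_congr' fun u => ?_
    change T u ^ k = 1 ↔ u ^ k = 1
    rw [Units.ext_iff, Units.val_pow_eq_pow_val, Units.val_one, ← teichmuller_pow hT1 hT2,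
      ← teichmuller_one hT1 hT2, (Function.LeftInverse.injective hT2).eq_iff]
  calc ∑ μ, T μ ^ k = ∑ u : (ZMod p)ˣ, χ u := by
        rw [Fintype.sum_eq_add_sum_subtype_ne _ 0, teichmuller_zero hT1 hT2, zero_pow hk, zero_add]
        exact (Fintype.sum_equiv unitsEquivNeZero _ _ fun u => rfl).symm
    _ = _ := by simp only [sum_hom_units, hχ, ZMod.card_units, apply_ite (Nat.cast : ℕ → ℤ_[p]),
      Nat.cast_zero]

theorem sum_one_add_teichmuller (hp2 : p ≠ 2) : ∑ μ : ZMod p, (1 + T μ) = p := by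
  have hndvd : ¬ p - 1 ∣ 1 := fun h => by
    have := Nat.le_of_dvd one_pos h; have := (Fact.out : p.Prime).two_le; omega
  have hsum : ∑ μ : ZMod p, T μ = 0 := by
    simpa [hndvd] using sum_teichmuller_pow hT1 hT2 one_ne_zero
  simp [sum_add_distrib, hsum, ZMod.card]

theorem sum_one_add_teichmuller_pow_prime (hp2 : p ≠ 2) :
    ∑ μ : ZMod p, (1 + T μ) ^ p = (p : ℤ_[p]) ^ 2 := by
  have hp3 : 3 ≤ p := by have := (Fact.out : p.Prime).two_le; omega
  calc ∑ μ : ZMod p, (1 + T μ) ^ p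
      = ∑ k ∈ range (p + 1), (∑ μ : ZMod p, T μ ^ k) * p.choose k := by
        simp_rw [add_comm (1 : ℤ_[p]), add_pow, one_pow, mul_one, sum_mul]
        exact sum_comm
    _ = ∑ k ∈ {0, p - 1}, (∑ μ : ZMod p, T μ ^ k) * p.choose k := by
        refine (sum_subset (fun k => by simp only [mem_insert, mem_singleton, mem_range]; omega)
          fun k hk hk' => ?_).symm
        simp only [mem_range, mem_insert, mem_singleton, not_or] at hk hk'
        rw [sum_teichmuller_pow hT1 hT2 hk'.1, if_neg, zero_mul]
        exact fun h => hk'.2 (Nat.eq_of_dvd_of_lt_two_mul hk'.1 h (by omega))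
    _ = (p : ℤ_[p]) ^ 2 := by
        rw [sum_pair (by omega), sum_teichmuller_pow hT1 hT2 (k := p - 1) (by omega),
          if_pos dvd_rfl, Nat.choose_symm (by omega : 1 ≤ p), Nat.choose_one_right]
        simp [ZMod.card, Nat.cast_sub (by omega : 1 ≤ p)]
        ring

theorem pow_dvd_one_add_teichmuller_pow_sub (hp2 : p ≠ 2) (μ : ZMod p) {t m : ℕ} (hm : p ^ t ∣ m) :
    (p : ℤ_[p]) ^ (t + 2) ∣
      (1 + T μ) ^ ((p - 1) * m + 1) - ((1 + T μ) + m * ((1 + T μ) ^ p - (1 + T μ))) := by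
  by_cases hμ : μ = -1
  · simp [hμ, teichmuller_neg_one hT1 hT2 hp2, (Fact.out : p.Prime).ne_zero]
  have hunit : (1 + μ) ^ (p - 1) = 1 :=
    ZMod.pow_card_sub_one_eq_one fun h => hμ (by linear_combination h)
  refine pow_dvd_pow_pred_mul_add_one_sub Fact.out hp2 (dvd_of_toZMod_eq_zero ?_) hm
  simp [hT2, hunit]

end Teichmuller

end PadicInt

/-- Lemma 2.4(1): Σ_{μ ∈ F_p} (1 + [μ])^r ≡ r·p (mod p^{t+2}) in ℤ_p, where
    [·] is the Teichmüller lift, r ≡ 1 mod (p-1), r > 1, and t = v_p(r-1). -/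
theorem stmt_7 (p : ℕ) [Fact p.Prime] (hp : 2 < p) (r : ℕ) (hr : 1 < r)
    (hcong : (p - 1) ∣ (r - 1)) (t : ℕ) (ht : t = padicValNat p (r - 1))
    (T : ZMod p → ℤ_[p]) (hT1 : ∀ μ, T μ ^ p = T μ)
    (hT2 : ∀ μ, PadicInt.toZMod (T μ) = μ) :
    (p : ℤ_[p]) ^ (t + 2) ∣ (∑ μ : ZMod p, (1 + T μ) ^ r) - (r : ℤ_[p]) * p := by
  have hp2 : p ≠ 2 := by omega
  obtain ⟨m, hm⟩ := hcong
  have hr' : r = (p - 1) * m + 1 := by omega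
  have hpm : p ^ t ∣ m := by
    have hcop : (p ^ t).Coprime (p - 1) :=
      ((Nat.coprime_self_sub_right (Fact.out : p.Prime).one_le).mpr
        (Nat.coprime_one_right p)).pow_left t
    exact hcop.dvd_of_dvd_mul_left (hm ▸ ht ▸ pow_padicValNat_dvd)
  have happrox : ∑ μ, ((1 + T μ) + m * ((1 + T μ) ^ p - (1 + T μ))) = (r : ℤ_[p]) * p := by
    rw [sum_add_distrib, ← mul_sum, sum_sub_distrib,
      PadicInt.sum_one_add_teichmuller_pow_prime hT1 hT2 hp2,
      PadicInt.sum_one_add_teichmuller hT1 hT2 hp2, hr']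
    push_cast [Nat.cast_sub (Fact.out : p.Prime).one_le]
    ring
  rw [← happrox, ← sum_sub_distrib, hr']
  exact dvd_sum fun μ _ => PadicInt.pow_dvd_one_add_teichmuller_pow_sub hT1 hT2 hp2 μ hpm
end

section
/- Let p > 2 be prime, r > 1 an integer with r ≡ 1 (mod p-1), and t = v_p(r-1). Then the sum over all μ ∈ F_p of (1 + [μ])^{r-1}, where [μ] is the Teichmüller lift of μ, is congruent to p - 1 modulo p^{t+1}. -/
/-!
For `μ ≠ -1` the reduction of `1 + [μ]` is nonzero in `𝔽_p`, so `(1 + [μ]) ^ (p - 1) ≡ 1 (mod p)`;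
raising to the power `p ^ t` lifts this to a congruence modulo `p ^ (t + 1)`, and since
`(p - 1) * p ^ t ∣ r - 1` every such term is `≡ 1`. The term `μ = -1` is divisible by
`p ^ (r - 1)`, and `t < r - 1`. So the sum is `≡ p - 1`.
-/

theorem Fintype.sum_ite_eq_zero_else_one {α R : Type*} [Fintype α] [DecidableEq α] [Ring R]
    (a : α) : ∑ x, (if x = a then 0 else 1 : R) = Fintype.card α - 1 := by
  have : 1 ≤ Fintype.card α := Fintype.card_pos_iff.2 ⟨a⟩
  simp [Finset.sum_ite, Finset.filter_ne', Nat.cast_sub this]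

namespace PadicInt

variable {p : ℕ} [Fact p.Prime]

theorem p_dvd_iff_toZMod_eq_zero {x : ℤ_[p]} : (p : ℤ_[p]) ∣ x ↔ toZMod x = 0 := by
  rw [← Ideal.mem_span_singleton, ← maximalIdeal_eq_span_p, ← ker_toZMod, RingHom.mem_ker]

theorem p_pow_succ_dvd_pow_sub_one {x : ℤ_[p]} (hx : toZMod x ≠ 0) {t n : ℕ}
    (hn : (p - 1) * p ^ t ∣ n) : (p : ℤ_[p]) ^ (t + 1) ∣ x ^ n - 1 := by
  obtain ⟨s, rfl⟩ := hn
  have fermat : (p : ℤ_[p]) ∣ x ^ (p - 1) - 1 := by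
    rw [p_dvd_iff_toZMod_eq_zero, map_sub, map_pow, ZMod.pow_card_sub_one_eq_one hx, map_one,
      sub_self]
  have lift : (p : ℤ_[p]) ^ (t + 1) ∣ x ^ ((p - 1) * p ^ t) - 1 := by
    simpa [pow_mul] using dvd_sub_pow_of_dvd_sub fermat t
  exact lift.trans <| by simpa [pow_mul] using sub_dvd_pow_sub_pow (x ^ ((p - 1) * p ^ t)) 1 s

theorem p_pow_succ_dvd_pow {x : ℤ_[p]} (hx : toZMod x = 0) {t n : ℕ} (hn : p ^ t ∣ n)
    (hn0 : n ≠ 0) : (p : ℤ_[p]) ^ (t + 1) ∣ x ^ n :=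
  (pow_dvd_pow _ (Nat.lt_of_pow_dvd_right hn0 (Fact.out : p.Prime).two_le hn)).trans
    (pow_dvd_pow_of_dvd (p_dvd_iff_toZMod_eq_zero.2 hx) n)

end PadicInt

theorem stmt_8_general (p : ℕ) [Fact p.Prime] (r : ℕ) (hr : 1 < r)
    (hcong : (p - 1) ∣ (r - 1)) (t : ℕ) (ht : t = padicValNat p (r - 1))
    (T : ZMod p → ℤ_[p])
    (hT2 : ∀ μ, PadicInt.toZMod (T μ) = μ) :
    (p : ℤ_[p]) ^ (t + 1) ∣ (∑ μ : ZMod p, (1 + T μ) ^ (r - 1)) - ((p : ℤ_[p]) - 1) := by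
  have hpt : p ^ t ∣ r - 1 := ht ▸ pow_padicValNat_dvd
  have hcop : (p - 1).Coprime (p ^ t) :=
    ((Nat.coprime_self_sub_left (Fact.out : p.Prime).one_lt.le).2
      (Nat.coprime_one_left p)).pow_right t
  have term (μ : ZMod p) :
      (p : ℤ_[p]) ^ (t + 1) ∣ (1 + T μ) ^ (r - 1) - if μ = -1 then 0 else 1 := by
    split_ifs with hμ
    · rw [sub_zero]
      exact PadicInt.p_pow_succ_dvd_pow (by simp [hT2, hμ]) hpt (by omega)
    · refine PadicInt.p_pow_succ_dvd_pow_sub_one ?_ (hcop.mul_dvd_of_dvd_of_dvd hcong hpt)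
      rwa [map_add, map_one, hT2, Ne, add_eq_zero_iff_neg_eq, eq_comm]
  have hsum : ∑ μ : ZMod p, (if μ = -1 then 0 else 1 : ℤ_[p]) = p - 1 := by
    rw [Fintype.sum_ite_eq_zero_else_one, ZMod.card]
  rw [← hsum, ← Finset.sum_sub_distrib]
  exact Finset.dvd_sum fun μ _ => term μ

/-- Lemma 2.4(2): Σ_{μ ∈ F_p} (1 + [μ])^{r-1} ≡ p - 1 (mod p^{t+1}) in ℤ_p. -/
theorem stmt_8 (p : ℕ) [Fact p.Prime] (hp : 2 < p) (r : ℕ) (hr : 1 < r)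
    (hcong : (p - 1) ∣ (r - 1)) (t : ℕ) (ht : t = padicValNat p (r - 1))
    (T : ZMod p → ℤ_[p]) (hT1 : ∀ μ, T μ ^ p = T μ)
    (hT2 : ∀ μ, PadicInt.toZMod (T μ) = μ) :
    (p : ℤ_[p]) ^ (t + 1) ∣ (∑ μ : ZMod p, (1 + T μ) ^ (r - 1)) - ((p : ℤ_[p]) - 1) :=
  stmt_8_general p r hr hcong t ht T hT2
end

section
/- Let p > 2 be prime, r > 1 an integer with r ≡ 1 (mod p-1), and t = v_p(r-1). Then for every λ ∈ F_p, the sum over μ ∈ F_p of ([μ] - [λ])^{r-1} is congruent to p - 1 modulo p^{t+1} in Z_p. -/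
/-!
Every nonzero residue satisfies `x ^ (p - 1) = 1` in `𝔽_p`, so for `μ ≠ λ` the unit
`[μ] - [λ]` has `([μ] - [λ]) ^ (p - 1) ≡ 1 mod p`. Since `p - 1` is prime to `p`, the
exponent `r - 1` is a multiple of `(p - 1) * p ^ t`, and raising a number `≡ 1 mod p` to a
`p ^ t`-th power gives a number `≡ 1 mod p ^ (t + 1)`. Hence each of the `p - 1` terms with
`μ ≠ λ` is `≡ 1 mod p ^ (t + 1)`, while the term `μ = λ` vanishes.
-/

theorem pow_succ_dvd_pow_sub_one {R : Type*} [CommRing R] {p t n : ℕ} {x : R}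
    (hx : (p : R) ∣ x - 1) (hn : p ^ t ∣ n) : (p : R) ^ (t + 1) ∣ x ^ n - 1 := by
  obtain ⟨s, rfl⟩ := hn
  have hpow : (p : R) ^ (t + 1) ∣ x ^ p ^ t - 1 := by
    simpa using dvd_sub_pow_of_dvd_sub hx t
  simpa [pow_mul] using hpow.trans (sub_one_dvd_pow_sub_one (x ^ p ^ t) s)

theorem Finset.dvd_sum_sub_card_erase {ι R : Type*} [DecidableEq ι] [CommRing R]
    {s : Finset ι} {f : ι → R} {q : R} {i : ι} (hi : f i = 0)
    (h : ∀ j ∈ s.erase i, q ∣ f j - 1) :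
    q ∣ ∑ j ∈ s, f j - ((s.erase i).card : R) := by
  have hsum : ∑ j ∈ s, f j = ∑ j ∈ s.erase i, f j := (Finset.sum_erase s hi).symm
  rw [hsum, ← nsmul_one, ← Finset.sum_const, ← Finset.sum_sub_distrib]
  exact Finset.dvd_sum h

namespace PadicInt

variable {p : ℕ} [Fact p.Prime]

theorem p_dvd_sub_one_of_toZMod_eq_one {x : ℤ_[p]} (hx : toZMod x = 1) :
    (p : ℤ_[p]) ∣ x - 1 := by
  have hker : x - 1 ∈ RingHom.ker (toZMod : ℤ_[p] →+* ZMod p) := by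
    simp [RingHom.mem_ker, hx]
  rwa [ker_toZMod, maximalIdeal_eq_span_p, Ideal.mem_span_singleton] at hker

theorem p_dvd_pow_sub_one_sub_one {x : ℤ_[p]} (hx : toZMod x ≠ 0) :
    (p : ℤ_[p]) ∣ x ^ (p - 1) - 1 :=
  p_dvd_sub_one_of_toZMod_eq_one (by rw [map_pow, ZMod.pow_card_sub_one_eq_one hx])

theorem pow_succ_padicValNat_dvd_pow_sub_one {x : ℤ_[p]} (hx : toZMod x ≠ 0) {n : ℕ}
    (hn : p - 1 ∣ n) : (p : ℤ_[p]) ^ (padicValNat p n + 1) ∣ x ^ n - 1 := by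
  obtain ⟨k, rfl⟩ := hn
  have hcop : Nat.Coprime (p ^ padicValNat p ((p - 1) * k)) (p - 1) :=
    Nat.Coprime.pow_left _ <| (Nat.coprime_self_sub_right (Fact.out : p.Prime).one_le).2
      (Nat.coprime_one_right p)
  have hk : p ^ padicValNat p ((p - 1) * k) ∣ k := hcop.dvd_of_dvd_mul_left pow_padicValNat_dvd
  rw [pow_mul]
  exact pow_succ_dvd_pow_sub_one (p_dvd_pow_sub_one_sub_one hx) hk

end PadicInt

theorem stmt_10_general (p : ℕ) [Fact p.Prime] (r : ℕ) (hr : 1 < r)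
    (hcong : (p - 1) ∣ (r - 1)) (t : ℕ) (ht : t = padicValNat p (r - 1))
    (T : ZMod p → ℤ_[p])
    (hT2 : ∀ μ, PadicInt.toZMod (T μ) = μ) (lam : ZMod p) :
    (p : ℤ_[p]) ^ (t + 1) ∣
      (∑ μ : ZMod p, (T μ - T lam) ^ (r - 1)) - ((p : ℤ_[p]) - 1) := by
  have hcard : ((Finset.univ.erase lam).card : ℤ_[p]) = (p : ℤ_[p]) - 1 := by
    rw [Finset.card_erase_of_mem (Finset.mem_univ lam), Finset.card_univ, ZMod.card,
      Nat.cast_pred (Fact.out : p.Prime).pos]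
  rw [← hcard, ht]
  refine Finset.dvd_sum_sub_card_erase (by simp [zero_pow (Nat.sub_ne_zero_of_lt hr)]) ?_
  intro μ hμ
  refine PadicInt.pow_succ_padicValNat_dvd_pow_sub_one ?_ hcong
  rw [map_sub, hT2, hT2, sub_ne_zero]
  exact Finset.ne_of_mem_erase hμ

/-- Corollary 2.5(2): for all λ ∈ F_p, Σ_{μ ∈ F_p} ([μ] - [λ])^{r-1} ≡ p - 1
    (mod p^{t+1}) in ℤ_p. -/
theorem stmt_10 (p : ℕ) [Fact p.Prime] (hp : 2 < p) (r : ℕ) (hr : 1 < r)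
    (hcong : (p - 1) ∣ (r - 1)) (t : ℕ) (ht : t = padicValNat p (r - 1))
    (T : ZMod p → ℤ_[p]) (hT1 : ∀ μ, T μ ^ p = T μ)
    (hT2 : ∀ μ, PadicInt.toZMod (T μ) = μ) (lam : ZMod p) :
    (p : ℤ_[p]) ^ (t + 1) ∣
      (∑ μ : ZMod p, (T μ - T lam) ^ (r - 1)) - ((p : ℤ_[p]) - 1) :=
  stmt_10_general p r hr hcong t ht T hT2 lam
end

section
/- Let p > 2 be prime, r > 1 an integer with r ≡ 1 (mod p-1), and t = v_p(r-1). Then for every λ ∈ F_p, in the polynomial ring Z_p[x,y], the sum over μ ∈ F_p of ([μ]x - [λ]x + py)^r is congruent to -[λ]·r·p·x^r + r·p·(p-1)·x^{r-1}·y modulo p^{t+2}·Z_p[x,y]. -/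
/-!
Write `[μ] - [λ] = [μ - λ] + p c_μ`. For odd `p` and `p ^ t ∣ n`, each binomial term
`C(n, k) p ^ k` with `k ≥ 2` is divisible by `p ^ (t + 2)`, and multiplying by `b + p c` gives
`(b + p c) ^ (n + 1) ≡ b ^ (n + 1) + (n + 1) b ^ n p c [mod p ^ (t + 2)]`. With `n = r - 1` this
reduces `∑_μ (([μ] - [λ]) x + p y) ^ r` to `S_r x ^ r + r p S_(r-1) x ^ (r - 1) y`, where
`S_j = ∑_μ ([μ] - [λ]) ^ j`. The same congruence for `[μ] - [λ]` itself, and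
`a ≡ b [mod p] → a ^ (r - 1) ≡ b ^ (r - 1) [mod p ^ (t + 1)]`, compare `S_r` and `S_(r-1)` with
sums of powers of `[μ - λ]`; since `[ν] ^ (r - 1) = 1` for `ν ≠ 0` (as `p - 1 ∣ r - 1`) and
`∑_ν [ν] = 0`, this gives `S_r ≡ -r p [λ] [mod p ^ (t + 2)]` and
`S_(r-1) ≡ p - 1 [mod p ^ (t + 1)]`.
-/

theorem Nat.add_two_le_of_pow_dvd {p e k : ℕ} (hp : 3 ≤ p) (hk : 2 ≤ k) (he : p ^ e ∣ k) :
    e + 2 ≤ k := by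
  obtain _ | f := e
  · exact hk
  · have hf : f < p ^ f := Nat.lt_pow_self (by omega)
    have hk' : p * p ^ f ≤ k := _root_.pow_succ' p f ▸ Nat.le_of_dvd (by omega) he
    nlinarith

theorem Nat.pow_add_two_dvd_choose_mul_pow {p t n k : ℕ} (hp : p.Prime) (hp2 : p ≠ 2)
    (hn : p ^ t ∣ n) (hk : 2 ≤ k) : p ^ (t + 2) ∣ n.choose k * p ^ k := by
  obtain ⟨e, m, hpm, hkm⟩ := Nat.exists_eq_pow_mul_and_not_dvd (by omega : k ≠ 0) p hp.ne_one
  have hmul : p ^ t ∣ k * n.choose k := by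
    obtain _ | n := n
    · simp [Nat.choose_eq_zero_of_lt (by omega : 0 < k)]
    obtain ⟨j, rfl⟩ : ∃ j, k = j + 1 := ⟨k - 1, by omega⟩
    rw [mul_comm, ← Nat.add_one_mul_choose_eq]
    exact hn.mul_right _
  have hchoose : p ^ t ∣ p ^ e * n.choose k := by
    refine ((hp.coprime_iff_not_dvd.mpr hpm).pow_left t).dvd_of_dvd_mul_left ?_
    rwa [← mul_assoc, mul_comm m, ← hkm]
  have he : e + 2 ≤ k := Nat.add_two_le_of_pow_dvd (by have := hp.two_le; omega) hk
    (hkm ▸ dvd_mul_right _ _)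
  calc p ^ (t + 2) ∣ p ^ e * n.choose k * p ^ 2 := by
        rw [pow_add]; exact mul_dvd_mul_right hchoose _
    _ = n.choose k * p ^ (e + 2) := by ring
    _ ∣ n.choose k * p ^ k := mul_dvd_mul_left _ (pow_dvd_pow p he)

section BinomialCongruence

variable {R : Type*} [CommRing R] {p t n : ℕ}

theorem pow_add_two_dvd_add_mul_pow_sub (hp : p.Prime) (hp2 : p ≠ 2) (hn : p ^ t ∣ n)
    (b c : R) : (p : R) ^ (t + 2) ∣ (b + p * c) ^ n - b ^ n - n * b ^ (n - 1) * (p * c) := by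
  obtain _ | m := n
  · simp
  have hterm : ∀ i ∈ Finset.range m, (p : R) ^ (t + 2) ∣
      (p * c) ^ (i + 2) * b ^ (m + 1 - (i + 2)) * ((m + 1).choose (i + 2) : R) := by
    intro i _
    have h := Nat.cast_dvd_cast (α := R) (Nat.pow_add_two_dvd_choose_mul_pow hp hp2 hn
      (Nat.le_add_left 2 i))
    push_cast at h
    rw [show (p * c) ^ (i + 2) * b ^ (m + 1 - (i + 2)) * ((m + 1).choose (i + 2) : R) =
      ((m + 1).choose (i + 2) * p ^ (i + 2)) * (c ^ (i + 2) * b ^ (m + 1 - (i + 2))) by ring]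
    exact h.mul_right _
  convert Finset.dvd_sum hterm using 1
  rw [add_comm b, add_pow, Finset.sum_range_succ', Finset.sum_range_succ']
  simp only [Nat.reduceSubDiff, zero_add, pow_one, add_tsub_cancel_right, Nat.choose_one_right,
    Nat.cast_add, Nat.cast_one, pow_zero, tsub_zero, one_mul, Nat.choose_zero_right, mul_one,
    add_sub_cancel_right]
  ring

theorem pow_add_two_dvd_pow_succ_sub (hp : p.Prime) (hp2 : p ≠ 2) (hn : p ^ t ∣ n) {a b : R}
    (hab : (p : R) ∣ a - b) :
    (p : R) ^ (t + 2) ∣ a ^ (n + 1) - b ^ (n + 1) - (n + 1) * b ^ n * (a - b) := by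
  obtain ⟨c, hc⟩ := hab
  obtain rfl : a = b + p * c := by linear_combination hc
  obtain ⟨X, hX⟩ := pow_add_two_dvd_add_mul_pow_sub hp hp2 hn b c
  obtain ⟨m, hm⟩ : (p : R) ^ t ∣ n := by exact_mod_cast Nat.cast_dvd_cast (α := R) hn
  have hb : (n : R) * (b * b ^ (n - 1)) = n * b ^ n := by
    obtain _ | n := n <;> simp [pow_succ']
  refine ⟨(b + p * c) * X + m * b ^ (n - 1) * c ^ 2, ?_⟩
  linear_combination (b + p * c) * hX + (p ^ 2 * b ^ (n - 1) * c ^ 2) * hm + p * c * hb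

theorem pow_succ_dvd_pow_sub_pow {a b : R} (hab : (p : R) ∣ a - b) (hn : p ^ t ∣ n) :
    (p : R) ^ (t + 1) ∣ a ^ n - b ^ n := by
  obtain ⟨m, rfl⟩ := hn
  rw [pow_mul, pow_mul]
  exact (dvd_sub_pow_of_dvd_sub hab t).trans (sub_dvd_pow_sub_pow _ _ m)

theorem pow_add_two_dvd_sum_add_mul_pow_succ_sub (hp : p.Prime) (hp2 : p ≠ 2) (hn : p ^ t ∣ n)
    {ι : Type*} (s : Finset ι) (u : ι → R) (w : R) :
    (p : R) ^ (t + 2) ∣ ∑ i ∈ s, (u i + p * w) ^ (n + 1) - ∑ i ∈ s, u i ^ (n + 1)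
      - (n + 1) * (∑ i ∈ s, u i ^ n) * (p * w) := by
  convert Finset.dvd_sum (s := s) fun i _ => pow_add_two_dvd_pow_succ_sub hp hp2 hn
    (a := u i + p * w) (b := u i) (by simp) using 1
  simp [Finset.sum_sub_distrib, Finset.mul_sum, Finset.sum_mul]

end BinomialCongruence

namespace PadicInt

variable {p : ℕ} [Fact p.Prime]

theorem eq_of_pow_eq_self_s11 {x y : ℤ_[p]} (hx : x ^ p = x) (hy : y ^ p = y)
    (h : toZMod x = toZMod y) : x = y := by
  have hgeom : (∑ i ∈ Finset.range p, x ^ i * y ^ (p - 1 - i)) * (x - y) = x - y := by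
    rw [geom_sum₂_mul, hx, hy]
  have hsum : (∑ i ∈ Finset.range p, x ^ i * y ^ (p - 1 - i)) ≠ 1 := by
    intro h1
    have h2 := congrArg toZMod h1
    -- modulo `p` every summand is `toZMod y ^ (p - 1)`, so the sum becomes `p • _ = 0`
    simp only [map_sum, map_mul, map_pow, map_one, h, ← pow_add] at h2
    rw [Finset.sum_congr rfl fun i hi => by rw [Nat.add_sub_cancel' (by rw [Finset.mem_range] at hi; omega)]] at h2
    simp at h2
  have := mul_eq_zero.mp (show (_ - 1) * (x - y) = 0 by rw [sub_mul, hgeom, one_mul, sub_self])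
  exact sub_eq_zero.mp (this.resolve_left (sub_ne_zero.mpr hsum))

structure IsTeichmullerLift (T : ZMod p → ℤ_[p]) : Prop where
  pow_eq_self : ∀ μ, T μ ^ p = T μ
  toZMod_apply : ∀ μ, toZMod (T μ) = μ

namespace IsTeichmullerLift

variable {T : ZMod p → ℤ_[p]} (hT : IsTeichmullerLift T)
include hT

theorem map_zero : T 0 = 0 :=
  eq_of_pow_eq_self_s11 (hT.pow_eq_self 0) (zero_pow (Fact.out : p.Prime).ne_zero)
    (by rw [hT.toZMod_apply, RingHom.map_zero])

theorem map_mul (μ ν : ZMod p) : T (μ * ν) = T μ * T ν :=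
  eq_of_pow_eq_self_s11 (hT.pow_eq_self _) (by rw [mul_pow, hT.pow_eq_self, hT.pow_eq_self])
    (by rw [RingHom.map_mul, hT.toZMod_apply, hT.toZMod_apply, hT.toZMod_apply])

theorem pow_sub_one_eq_one {ν : ZMod p} (hν : ν ≠ 0) : T ν ^ (p - 1) = 1 := by
  have hT0 : T ν ≠ 0 := fun h => hν (by rw [← hT.toZMod_apply ν, h, RingHom.map_zero])
  refine mul_right_cancel₀ hT0 ?_
  rw [← pow_succ, Nat.sub_add_cancel (Fact.out : p.Prime).one_le, hT.pow_eq_self, one_mul]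

theorem pow_eq_one {ν : ZMod p} (hν : ν ≠ 0) {n : ℕ} (hn : p - 1 ∣ n) : T ν ^ n = 1 := by
  obtain ⟨k, rfl⟩ := hn
  rw [pow_mul, hT.pow_sub_one_eq_one hν, one_pow]

theorem sum_eq_zero (hp : p ≠ 2) : ∑ μ, T μ = 0 := by
  have h2 : (2 : ZMod p) ≠ 0 := Ring.two_ne_zero (by rwa [ZMod.ringChar_zmod_n])
  have hT2 : T 2 ≠ 1 := fun h => by
    have h21 := hT.toZMod_apply 2
    rw [h, RingHom.map_one] at h21
    exact one_ne_zero (by linear_combination -h21 : (1 : ZMod p) = 0)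
  have hperm : ∑ μ, T (2 * μ) = ∑ μ, T μ := Equiv.sum_comp (Equiv.mulLeft₀ 2 h2) T
  simp_rw [hT.map_mul, ← Finset.mul_sum] at hperm
  have := mul_eq_zero.mp (show (T 2 - 1) * ∑ μ, T μ = 0 by linear_combination hperm)
  exact this.resolve_left (sub_ne_zero.mpr hT2)

theorem sum_pow_eq {n : ℕ} (hn0 : n ≠ 0) (hn : p - 1 ∣ n) : ∑ ν, T ν ^ n = p - 1 := by
  rw [← Finset.sum_erase_add _ _ (Finset.mem_univ 0), hT.map_zero, zero_pow hn0, add_zero,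
    Finset.sum_congr rfl fun ν hν => hT.pow_eq_one (Finset.ne_of_mem_erase hν) hn]
  simp [Finset.card_erase_of_mem, Nat.cast_sub (Fact.out : p.Prime).one_le]

theorem dvd_sub_sub (μ ν : ZMod p) : (p : ℤ_[p]) ∣ T μ - T ν - T (μ - ν) := by
  rw [← Ideal.mem_span_singleton, ← maximalIdeal_eq_span_p, ← ker_toZMod, RingHom.mem_ker]
  simp [hT.toZMod_apply]

theorem pow_add_two_dvd_sum_sub_pow_succ (hp : p ≠ 2) {t n : ℕ} (hpt : p ^ t ∣ n)
    (hn : p - 1 ∣ n) (lam : ZMod p) :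
    (p : ℤ_[p]) ^ (t + 2) ∣ ∑ μ, (T μ - T lam) ^ (n + 1) + (n + 1) * p * T lam := by
  have hlin (μ : ZMod p) :
      T (μ - lam) ^ (n + 1) + (n + 1) * T (μ - lam) ^ n * (T μ - T lam - T (μ - lam))
        = T (μ - lam) + (n + 1) * (T μ - T lam - T (μ - lam)) := by
    rcases eq_or_ne μ lam with rfl | hμ
    · simp [hT.map_zero]
    · rw [pow_succ, hT.pow_eq_one (sub_ne_zero.mpr hμ) hn]
      ring
  have hshift : ∑ μ, T (μ - lam) = 0 :=
    (Equiv.sum_comp (Equiv.subRight lam) T).trans (hT.sum_eq_zero hp)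
  have hsum : ∑ μ, ((T μ - T lam) ^ (n + 1) - T (μ - lam) - (n + 1) * (T μ - T lam - T (μ - lam)))
      = ∑ μ, (T μ - T lam) ^ (n + 1) + (n + 1) * p * T lam := by
    simp only [Finset.sum_sub_distrib, ← Finset.mul_sum, hshift, hT.sum_eq_zero hp]
    simp only [sub_zero, Finset.sum_const, Finset.card_univ, ZMod.card, nsmul_eq_mul, zero_sub,
      mul_neg, sub_neg_eq_add, add_right_inj]
    ring
  rw [← hsum]
  refine Finset.dvd_sum fun μ _ => ?_
  convert pow_add_two_dvd_pow_succ_sub (Fact.out : p.Prime) hp hpt (hT.dvd_sub_sub μ lam) using 1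
  linear_combination hlin μ

theorem pow_succ_dvd_sum_sub_pow_sub {t n : ℕ} (hn0 : n ≠ 0) (hpt : p ^ t ∣ n) (hn : p - 1 ∣ n)
    (lam : ZMod p) : (p : ℤ_[p]) ^ (t + 1) ∣ ∑ μ, (T μ - T lam) ^ n - (p - 1) := by
  rw [← hT.sum_pow_eq hn0 hn, ← Equiv.sum_comp (Equiv.subRight lam) (T · ^ n),
    ← Finset.sum_sub_distrib]
  exact Finset.dvd_sum fun μ _ => pow_succ_dvd_pow_sub_pow (hT.dvd_sub_sub μ lam) hpt

end IsTeichmullerLift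

end PadicInt

open MvPolynomial

/-- Corollary 2.6: for λ ∈ F_p, Σ_{μ ∈ F_p} ([μ]x - [λ]x + py)^r ≡
    -[λ]·r·p·x^r + r·p·(p-1)·x^{r-1}·y (mod p^{t+2}) in ℤ_p[x,y]. -/
theorem stmt_11 (p : ℕ) [Fact p.Prime] (hp : 2 < p) (r : ℕ) (hr : 1 < r)
    (hcong : (p - 1) ∣ (r - 1)) (t : ℕ) (ht : t = padicValNat p (r - 1))
    (T : ZMod p → ℤ_[p]) (hT1 : ∀ μ, T μ ^ p = T μ)
    (hT2 : ∀ μ, PadicInt.toZMod (T μ) = μ) (lam : ZMod p) :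
    let x : MvPolynomial (Fin 2) ℤ_[p] := X 0
    let y : MvPolynomial (Fin 2) ℤ_[p] := X 1
    ∃ D : MvPolynomial (Fin 2) ℤ_[p],
      (∑ μ : ZMod p, (C (T μ) * x - C (T lam) * x + (p : MvPolynomial (Fin 2) ℤ_[p]) * y) ^ r)
        - (C (-(T lam) * (r : ℤ_[p]) * p) * x ^ r
            + C ((r : ℤ_[p]) * p * ((p : ℤ_[p]) - 1)) * x ^ (r - 1) * y)
      = (p : MvPolynomial (Fin 2) ℤ_[p]) ^ (t + 2) * D := by
  intro x y
  obtain ⟨n, rfl⟩ : ∃ n, r = n + 1 := ⟨r - 1, by omega⟩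
  rw [Nat.add_sub_cancel] at hcong ht ⊢
  have hpt : p ^ t ∣ n := ht ▸ pow_padicValNat_dvd
  have hT : PadicInt.IsTeichmullerLift T := ⟨hT1, hT2⟩
  obtain ⟨d₀, hd₀⟩ := hT.pow_add_two_dvd_sum_sub_pow_succ hp.ne' hpt hcong lam
  obtain ⟨d₁, hd₁⟩ := hT.pow_succ_dvd_sum_sub_pow_sub (by omega) hpt hcong lam
  obtain ⟨D, hD⟩ := pow_add_two_dvd_sum_add_mul_pow_succ_sub (Fact.out : p.Prime) hp.ne' hpt
    Finset.univ (fun μ => C (T μ - T lam) * x) y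
  refine ⟨D + C d₀ * x ^ (n + 1) + ((n : MvPolynomial (Fin 2) ℤ_[p]) + 1) * C d₁ * x ^ n * y, ?_⟩
  have hC₀ := congrArg (C (σ := Fin 2)) hd₀
  have hC₁ := congrArg (C (σ := Fin 2)) hd₁
  simp only [map_add, map_sub, map_mul, map_pow, map_neg, map_natCast, map_one] at hC₀ hC₁ ⊢
  simp only [← sub_mul, ← map_sub]
  simp only [mul_pow, ← map_pow, ← Finset.sum_mul, ← map_sum] at hD
  push_cast
  linear_combination hD + x ^ (n + 1) * hC₀ + (n + 1) * p * x ^ n * y * hC₁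
end

section
/- Let p be prime and let s, t range over F_p. Then the sum over all s, t ∈ F_p of t·(tX - sY)^{p-2} is the zero polynomial in F_p[X,Y]. -/
open MvPolynomial Finset

/-- Expanding binomially, each coefficient is a power sum `∑ s, s ^ k` with `k < q - 1`,
which vanishes. -/
theorem FiniteField.sum_add_smul_pow_eq_zero {K A : Type*} [Field K] [Fintype K] [CommRing A]
    [Algebra K A] (a b : A) {n : ℕ} (hn : n < Fintype.card K - 1) :
    ∑ s : K, (a + s • b) ^ n = 0 := by
  simp_rw [add_comm a, add_pow, smul_pow]
  rw [sum_comm]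
  refine sum_eq_zero fun k hk => ?_
  have hkq : k < Fintype.card K - 1 := (Nat.lt_succ_iff.mp (mem_range.mp hk)).trans_lt hn
  simp_rw [smul_mul_assoc, ← sum_smul, FiniteField.sum_pow_lt_card_sub_one _ k hkq, zero_smul]

/-- Lemma 4.1(1): Σ_{s,t ∈ F_p} t·(tX - sY)^{p-2} = 0 in F_p[X,Y]. -/
theorem stmt_12 (p : ℕ) [Fact p.Prime] :
    ∑ s : ZMod p, ∑ t : ZMod p,
      C t * (C t * X 0 - C s * X 1 : MvPolynomial (Fin 2) (ZMod p)) ^ (p - 2) = 0 := by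
  have hp : p - 2 < Fintype.card (ZMod p) - 1 := by
    have := (Fact.out : p.Prime).two_le
    rw [ZMod.card]
    omega
  rw [sum_comm]
  refine sum_eq_zero fun t _ => ?_
  simp_rw [← mul_sum, C_mul', sub_eq_add_neg, ← smul_neg,
    FiniteField.sum_add_smul_pow_eq_zero _ _ hp, smul_zero]
end

section
/- Let p > 2 be prime and r a positive integer with r ≡ 1 (mod p-1). Then in F_p[X,Y], the sum over s, t ∈ F_p of s^{r-1}·t·(tX - sY)^{p-2} equals X^{p-2}. -/
/-!
Expanding `(t u + v) ^ (q - 2)` binomially, the sum over `t` of `t (t u + v) ^ (q - 2)` only sees the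
power sums `∑ t ^ (m + 1)` with `m ≤ q - 2`; these vanish except for `m = q - 2`, where the sum is `-1`.
So the inner sum is `-u ^ (q - 2)`, and the outer factor `∑ s ^ k` contributes another `-1`.
-/

open MvPolynomial Finset

namespace FiniteField

variable {K : Type*} [Field K] [Fintype K]

theorem sum_pow_of_card_sub_one_dvd {i : ℕ} (hi : 0 < i) (hdvd : Fintype.card K - 1 ∣ i) :
    ∑ x : K, x ^ i = -1 := by
  classical
  have hterm : ∀ x : K, x ^ i = 1 - if x = 0 then 1 else 0 := by
    intro x
    split_ifs with hx
    · simp [hx, hi.ne']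
    · obtain ⟨m, rfl⟩ := hdvd
      rw [pow_mul, pow_card_sub_one_eq_one x hx, one_pow, sub_zero]
  simp [hterm, sum_sub_distrib]

variable {A : Type*} [CommRing A] [Algebra K A]

theorem sum_mul_mul_add_pow_card_sub_two (u v : A) :
    ∑ t : K, algebraMap K A t * (algebraMap K A t * u + v) ^ (Fintype.card K - 2)
      = -u ^ (Fintype.card K - 2) := by
  set n := Fintype.card K - 2
  have hn : n + 1 = Fintype.card K - 1 := by
    have := Fintype.one_lt_card (α := K); omega
  calc ∑ t : K, algebraMap K A t * (algebraMap K A t * u + v) ^ n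
      = ∑ m ∈ range (n + 1), algebraMap K A (∑ t : K, t ^ (m + 1)) *
          (u ^ m * v ^ (n - m) * (n.choose m : A)) := by
        simp_rw [add_pow, mul_sum, map_sum, sum_mul]
        rw [sum_comm]
        refine sum_congr rfl fun m _ => sum_congr rfl fun t _ => ?_
        rw [map_pow, mul_pow]
        ring
    _ = algebraMap K A (∑ t : K, t ^ (n + 1)) * u ^ n := by
        rw [sum_range_succ, sum_eq_zero, zero_add]
        · simp
        intro m hm
        rw [sum_pow_lt_card_sub_one K _ (by rw [mem_range] at hm; omega), map_zero, zero_mul]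
    _ = -u ^ n := by
        rw [sum_pow_of_card_sub_one_dvd (by omega) (by rw [hn])]
        simp

theorem sum_sum_pow_mul_mul_sub_pow_card_sub_two {k : ℕ} (hk : 0 < k)
    (hdvd : Fintype.card K - 1 ∣ k) (u v : A) :
    ∑ s : K, ∑ t : K, algebraMap K A (s ^ k * t) *
      (algebraMap K A t * u - algebraMap K A s * v) ^ (Fintype.card K - 2)
      = u ^ (Fintype.card K - 2) := by
  have hinner : ∀ s : K, ∑ t : K, algebraMap K A (s ^ k * t) *
      (algebraMap K A t * u - algebraMap K A s * v) ^ (Fintype.card K - 2)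
      = algebraMap K A (s ^ k) * -u ^ (Fintype.card K - 2) := by
    intro s
    simp_rw [← sum_mul_mul_add_pow_card_sub_two (K := K) u (-(algebraMap K A s * v)), mul_sum,
      map_mul, sub_eq_add_neg, mul_assoc]
  simp_rw [hinner, ← sum_mul, ← map_sum, sum_pow_of_card_sub_one_dvd hk hdvd]
  simp

end FiniteField

theorem stmt_13_general (p : ℕ) [Fact p.Prime] (r : ℕ)
    (hcong : (p - 1) ∣ (r - 1)) (hr1 : 1 < r) :
    ∑ s : ZMod p, ∑ t : ZMod p,
      C (s ^ (r - 1) * t) * (C t * X 0 - C s * X 1 : MvPolynomial (Fin 2) (ZMod p)) ^ (p - 2)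
      = (X 0 : MvPolynomial (Fin 2) (ZMod p)) ^ (p - 2) := by
  simpa only [ZMod.card, MvPolynomial.algebraMap_eq] using
    FiniteField.sum_sum_pow_mul_mul_sub_pow_card_sub_two (K := ZMod p)
      (A := MvPolynomial (Fin 2) (ZMod p)) (k := r - 1) (by omega) (by rwa [ZMod.card]) (X 0) (X 1)

/-- Lemma 4.1(3): for p > 2 prime and r ≡ 1 (mod p-1) with r > 1,
    Σ_{s,t ∈ F_p} s^{r-1}·t·(tX - sY)^{p-2} = X^{p-2} in F_p[X,Y]. -/
theorem stmt_13 (p : ℕ) [Fact p.Prime] (hp : 2 < p) (r : ℕ) (hr : 0 < r)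
    (hcong : (p - 1) ∣ (r - 1)) (hr1 : 1 < r) :
    ∑ s : ZMod p, ∑ t : ZMod p,
      C (s ^ (r - 1) * t) * (C t * X 0 - C s * X 1 : MvPolynomial (Fin 2) (ZMod p)) ^ (p - 2)
      = (X 0 : MvPolynomial (Fin 2) (ZMod p)) ^ (p - 2) :=
  stmt_13_general p r hcong hr1
end

section
/- Let p > 2 be prime, r > 1 with r ≡ 1 (mod p-1), t = v_p(r-1), and let a ∈ Z̄_p with 0 < v(a) < 1, where v is the valuation normalized so v(p) = 1. Set t_0 = min{t + 1 + v(a), v(a² - rp)}. Then for every integer s ≥ 2, one has v(a^{s-1}(a² - p)) ≥ t_0. -/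
/-!
Write `a²-p = (a²-rp) + p(r-1)`. Multiplying by `aˢ⁻¹`, the first summand has valuation at least
`v(a²-rp)` because `v(a) ≥ 0`, and the second at least `v(a) + 1 + t` because `s-1 ≥ 1` and
`pᵗ ∣ r-1`; the ultrametric inequality gives the claim.
-/

namespace AddValuation

variable {K Γ : Type*} [Field K] [LinearOrderedAddCommMonoidWithTop Γ] (v : AddValuation K Γ)

theorem map_natCast_nonneg (n : ℕ) : 0 ≤ v (n : K) := by
  induction n with
  | zero => simp
  | succ n ih =>
    push_cast
    exact v.map_le_add ih (by simp)

theorem nsmul_le_map_natCast_of_pow_dvd {p n k : ℕ} (h : p ^ k ∣ n) :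
    k • v (p : K) ≤ v (n : K) := by
  obtain ⟨m, rfl⟩ := h
  push_cast
  rw [v.map_mul, v.map_pow]
  exact le_add_of_nonneg_right (v.map_natCast_nonneg m)

theorem min_le_map_pow_mul_add {a x y : K} (ha : 0 ≤ v a) {n : ℕ} (hn : n ≠ 0) :
    min (v x) (v a + v y) ≤ v (a ^ n * (x + y)) := by
  have hpow : v a ≤ v (a ^ n) := by
    rw [v.map_pow]
    exact le_self_nsmul ha hn
  rw [mul_add]
  refine v.map_le_add (min_le_left _ _ |>.trans ?_) (min_le_right _ _ |>.trans ?_)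
  · rw [v.map_mul]
    exact le_add_of_nonneg_left (ha.trans hpow)
  · rw [v.map_mul]
    gcongr

end AddValuation

theorem stmt_15_general (p : ℕ) (r : ℕ) (hr : 1 < r)
    (t : ℕ) (ht : t = padicValNat p (r - 1))
    (K : Type*) [Field K] (v : AddValuation K (WithTop ℝ))
    (hvp : v (p : K) = (1 : ℝ))
    (a : K) (ha0 : 0 < v a)
    (t₀ : WithTop ℝ)
    (ht₀ : t₀ = min (((t : ℝ) + 1 : ℝ) + v a) (v (a ^ 2 - (r : K) * p))) :
    ∀ s : ℕ, 2 ≤ s → v (a ^ (s - 1) * (a ^ 2 - (p : K))) ≥ t₀ := by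
  intro s hs
  have hvr : ((t : ℝ) : WithTop ℝ) ≤ v ((r - 1 : ℕ) : K) := by
    have := v.nsmul_le_map_natCast_of_pow_dvd (K := K) (ht ▸ pow_padicValNat_dvd)
    rwa [hvp, ← WithTop.coe_nsmul, nsmul_one] at this
  have hsplit : a ^ 2 - (p : K) = (a ^ 2 - r * p) + p * ((r - 1 : ℕ) : K) := by
    rw [Nat.cast_sub hr.le]
    push_cast
    ring
  rw [ht₀, hsplit, min_comm]
  refine le_trans (min_le_min_left _ ?_) (v.min_le_map_pow_mul_add ha0.le (by omega))
  rw [v.map_mul, hvp, WithTop.coe_add, add_comm, add_comm ((t : ℝ) : WithTop ℝ)]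
  gcongr

/-- If 0 < v(a) < 1 and t₀ = min(t + 1 + v(a), v(a² - rp)) with t = v_p(r-1),
    then v(a^{s-1}(a² - p)) ≥ t₀ for all s ≥ 2.  Here K is a valued field
    extending ℚ_p, formalized via an additive valuation v with v(p) = 1. -/
theorem stmt_15 (p : ℕ) (hp : p.Prime) (hp2 : 2 < p) (r : ℕ) (hr : 1 < r)
    (hcong : (p - 1) ∣ (r - 1)) (t : ℕ) (ht : t = padicValNat p (r - 1))
    (K : Type*) [Field K] (v : AddValuation K (WithTop ℝ))
    (hvp : v (p : K) = (1 : ℝ))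
    (a : K) (ha0 : 0 < v a) (ha1 : v a < (1 : ℝ))
    (t₀ : WithTop ℝ)
    (ht₀ : t₀ = min (((t : ℝ) + 1 : ℝ) + v a) (v (a ^ 2 - (r : K) * p))) :
    ∀ s : ℕ, 2 ≤ s → v (a ^ (s - 1) * (a ^ 2 - (p : K))) ≥ t₀ :=
  stmt_15_general p r hr t ht K v hvp a ha0 t₀ ht₀
end
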